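/- arXiv:2312.07291 — 3 statements merged into one kernel-verified Lean document; each statement's English description precedes it below -/
import Mathlib

section
/- Let τ > 0, α > −1 be real, n ∈ ℕ, and λ ∈ ℂ with Re λ < 0. Then s_{n,τ,α,λ} = (Γ(α/2+1)/(τ/2−λ)^{α/2+1}) · τ^{(α+1)/2} · (Γ(n+α+1)/(Γ(α+1)·n!)) · √(n!/Γ(n+α+1)) · Σ_{k=0}^n ((−n)_k · (α/2+1)_k / ((α+1)_k · k!)) · (τ/(τ/2−λ))^k, where (x)_k denotes the ascending Pochhammer symbol x(x+1)⋯(x+k−1), and (τ/2−λ)^{α/2+1} is the principal-branch complex power (note Re(τ/2−λ) > 0). -/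
open MeasureTheory

/-- The generalized Laguerre polynomial
`L_n^α(t) = ∑_{k=0}^n (-1)^k (Γ(n+α+1)/(Γ(k+α+1)(n-k)!)) t^k/k!`. -/
noncomputable def lagPoly (α : ℝ) (n : ℕ) (t : ℝ) : ℝ :=
  ∑ k ∈ Finset.range (n + 1),
    (-1 : ℝ) ^ k * (Real.Gamma (n + α + 1) / (Real.Gamma (k + α + 1) * (n - k).factorial)) *
      t ^ k / (k.factorial : ℝ)

/-- The Laguerre function `l_{n,τ}^α(t)`. -/
noncomputable def lagFun (α τ : ℝ) (n : ℕ) (t : ℝ) : ℝ :=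
  Real.sqrt (n.factorial / Real.Gamma (n + α + 1)) * τ ^ ((α + 1) / 2) *
    t ^ (α / 2) * Real.exp (-τ * t / 2) * lagPoly α n (τ * t)

/-- The Laguerre coefficient `s_{n,τ,α,λ} = ∫₀^∞ e^{λ t} l_{n,τ}^α(t) dt`. -/
noncomputable def lagCoef (α τ : ℝ) (n : ℕ) (z : ℂ) : ℂ :=
  ∫ t in Set.Ioi (0 : ℝ), Complex.exp (z * t) * (lagFun α τ n t : ℂ)

/-!
Expanding `L_n^α(τt)` as `Γ(n+α+1)/(Γ(α+1) n!) · ₁F₁(-n; α+1; τt)` turns the coefficient into a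
finite sum of Laplace transforms `∫₀^∞ e^{-wt} t^{α/2+k} dt = Γ(α/2+k+1) / w^{α/2+k+1}` with
`w = τ/2 - λ`, and `Γ(α/2+k+1) = Γ(α/2+1) (α/2+1)_k` produces the `₂F₁` coefficients.
For real `w > 0` the Laplace transform is Euler's integral; it extends to `Re w > 0` by the
identity theorem, since `w ↦ ∫₀^∞ e^{-wt} t^q dt` is the complex moment generating function of
the measure `t^q dt` on `(0, ∞)`, hence holomorphic.
-/

open Set Filter ProbabilityTheory Topology

theorem ascPochhammer_eval_ne_zero {R : Type*} [CommRing R] [IsDomain R] {x : R}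
    (hx : ∀ m : ℕ, x ≠ -m) (k : ℕ) : (ascPochhammer R k).eval x ≠ 0 := by
  rw [Ne, ascPochhammer_eval_eq_zero_iff]
  rintro ⟨m, -, hm⟩
  exact hx m (by rw [hm, neg_neg])

theorem ascPochhammer_eval_neg_natCast_mul_factorial {R : Type*} [CommRing R] {n k : ℕ}
    (hk : k ≤ n) :
    (ascPochhammer R k).eval (-(n : R)) * (n - k).factorial = (-1) ^ k * n.factorial := by
  rw [ascPochhammer_eval_neg_eq_descPochhammer, descPochhammer_eval_eq_descFactorial, mul_assoc]
  norm_cast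
  rw [mul_comm (Nat.descFactorial _ _), Nat.factorial_mul_descFactorial hk]

theorem Complex.Gamma_add_nat_eq_mul_ascPochhammer {x : ℂ} (hx : ∀ m : ℕ, x ≠ -m) (k : ℕ) :
    Gamma (x + k) = Gamma x * (ascPochhammer ℂ k).eval x := by
  rw [← Gamma_add_nat_div_Gamma_eq x hx, mul_div_cancel₀ _ (Gamma_ne_zero hx)]

theorem Complex.ofReal_add_one_ne_neg_natCast {x : ℝ} (hx : -1 < x) (m : ℕ) :
    (x : ℂ) + 1 ≠ -m := fun h => by
  have := congrArg Complex.re h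
  simp only [Complex.add_re, Complex.ofReal_re, Complex.one_re, Complex.neg_re,
    Complex.natCast_re] at this
  linarith [m.cast_nonneg (α := ℝ)]

theorem AnalyticOnNhd.eqOn_of_preconnected_of_eventuallyEq_ofReal {f g : ℂ → ℂ} {U : Set ℂ}
    (hf : AnalyticOnNhd ℂ f U) (hg : AnalyticOnNhd ℂ g U) (hU : IsPreconnected U) {x₀ : ℝ}
    (hx₀ : (x₀ : ℂ) ∈ U) (hfg : ∀ᶠ x : ℝ in 𝓝 x₀, f x = g x) : EqOn f g U := by
  have hofReal : Tendsto ((↑) : ℝ → ℂ) (𝓝[≠] x₀) (𝓝[≠] (x₀ : ℂ)) := by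
    rw [tendsto_nhdsWithin_iff]
    exact ⟨tendsto_nhdsWithin_of_tendsto_nhds Complex.continuous_ofReal.continuousAt,
      eventually_nhdsWithin_of_forall fun x hx => Complex.ofReal_injective.ne hx⟩
  exact hf.eqOn_of_preconnected_of_frequently_eq hg hU hx₀
    (hofReal.frequently (hfg.filter_mono nhdsWithin_le_nhds).frequently)

noncomputable def rpowMeasure (q : ℝ) : Measure ℝ :=
  (volume.restrict (Ioi 0)).withDensity fun t => (t ^ q).toNNReal

theorem integral_rpowMeasure (q : ℝ) (g : ℝ → ℂ) :
    ∫ t, g t ∂rpowMeasure q = ∫ t in Ioi 0, (t ^ q : ℝ) * g t := by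
  rw [rpowMeasure, integral_withDensity_eq_integral_smul (by fun_prop)]
  refine setIntegral_congr_fun measurableSet_Ioi fun t (ht : 0 < t) => ?_
  rw [NNReal.smul_def, Real.coe_toNNReal _ (Real.rpow_nonneg ht.le q), Complex.real_smul]

theorem Iio_subset_integrableExpSet_rpowMeasure {q : ℝ} (hq : -1 < q) :
    Iio 0 ⊆ integrableExpSet id (rpowMeasure q) := by
  intro s (hs : s < 0)
  rw [integrableExpSet, mem_ofPred_eq, rpowMeasure,
    integrable_withDensity_iff_integrable_smul (by fun_prop)]
  refine (integrableOn_rpow_mul_exp_neg_mul_rpow hq one_pos (neg_pos.2 hs)).congr_fun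
    (fun t (ht : 0 < t) => ?_) measurableSet_Ioi
  dsimp only
  rw [NNReal.smul_def, Real.coe_toNNReal _ (Real.rpow_nonneg ht.le q), smul_eq_mul, id, neg_neg,
    Real.rpow_one]

theorem complexMGF_rpowMeasure {q : ℝ} (hq : -1 < q) {z : ℂ} (hz : z.re < 0) :
    complexMGF id (rpowMeasure q) z = Real.Gamma (q + 1) / (-z) ^ ((q + 1 : ℝ) : ℂ) := by
  have hstrip :
      {w : ℂ | w.re < 0} ⊆ {w | w.re ∈ interior (integrableExpSet id (rpowMeasure q))} :=
    fun w hw => interior_maximal (Iio_subset_integrableExpSet_rpowMeasure hq) isOpen_Iio hw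
  refine AnalyticOnNhd.eqOn_of_preconnected_of_eventuallyEq_ofReal
    (g := fun w => Real.Gamma (q + 1) / (-w) ^ ((q + 1 : ℝ) : ℂ))
    (analyticOnNhd_complexMGF.mono hstrip) ?_ (convex_halfSpace_re_lt 0).isPreconnected
    (x₀ := -1) (by simp) ?_ hz
  · refine DifferentiableOn.analyticOnNhd (fun w (hw : w.re < 0) => ?_)
      (isOpen_lt Complex.continuous_re continuous_const)
    refine (differentiableAt_const _).div ?_ ?_ |>.differentiableWithinAt
    · exact differentiableAt_id.neg.cpow_const (Complex.mem_slitPlane_iff.2 (Or.inl (by simpa)))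
    · exact fun h => by simp_all [Complex.cpow_eq_zero_iff]
  · filter_upwards [eventually_lt_nhds neg_one_lt_zero] with x hx
    have ha : 0 < ((q : ℂ) + 1).re := by simpa using (by linarith : 0 < q + 1)
    have := Complex.integral_cpow_mul_exp_neg_mul_Ioi ha (neg_pos.2 hx)
    rw [complexMGF, integral_rpowMeasure]
    have hx' : ((-x : ℝ) : ℂ).arg ≠ Real.pi := by
      rw [Complex.arg_ofReal_of_nonneg (by linarith)]; exact Real.pi_ne_zero.symm
    rw [one_div, Complex.inv_cpow _ _ hx', inv_mul_eq_div] at this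
    rw [Complex.ofReal_add, Complex.ofReal_one, ← Complex.Gamma_ofReal, Complex.ofReal_add,
      Complex.ofReal_one, ← Complex.ofReal_neg, ← this]
    refine setIntegral_congr_fun measurableSet_Ioi fun t (ht : 0 < t) => ?_
    rw [add_sub_cancel_right, ← Complex.ofReal_cpow ht.le, id, Complex.ofReal_neg, neg_mul,
      neg_neg]

theorem integral_cexp_neg_mul_mul_rpow {q : ℝ} (hq : -1 < q) {b : ℂ} (hb : 0 < b.re) :
    ∫ t in Ioi (0 : ℝ), Complex.exp (-b * t) * ((t ^ q : ℝ) : ℂ) =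
      Real.Gamma (q + 1) / b ^ ((q + 1 : ℝ) : ℂ) := by
  have := complexMGF_rpowMeasure hq (z := -b) (by simpa using hb)
  rw [complexMGF, integral_rpowMeasure, neg_neg] at this
  simpa only [id, mul_comm] using this

theorem integral_cexp_neg_mul_mul_rpow_mul_pow {q : ℝ} (hq : -1 < q) {b : ℂ} (hb : 0 < b.re)
    (k : ℕ) :
    ∫ t in Ioi (0 : ℝ), Complex.exp (-b * t) * ((t ^ q : ℝ) : ℂ) * (t : ℂ) ^ k =
      Real.Gamma (q + 1) / b ^ ((q + 1 : ℝ) : ℂ) *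
        ((ascPochhammer ℂ k).eval ((q : ℂ) + 1) / b ^ k) := by
  have hb0 : b ≠ 0 := by rintro rfl; simp at hb
  have hqk : -1 < q + k := by linarith [k.cast_nonneg (α := ℝ)]
  have hpoch : (Real.Gamma (q + k + 1) : ℂ) =
      Real.Gamma (q + 1) * (ascPochhammer ℂ k).eval ((q : ℂ) + 1) := by
    rw [← Complex.Gamma_ofReal, ← Complex.Gamma_ofReal]
    push_cast
    rw [← Complex.Gamma_add_nat_eq_mul_ascPochhammer (Complex.ofReal_add_one_ne_neg_natCast hq)]
    ring_nf
  calc ∫ t in Ioi (0 : ℝ), Complex.exp (-b * t) * ((t ^ q : ℝ) : ℂ) * (t : ℂ) ^ k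
      = ∫ t in Ioi (0 : ℝ), Complex.exp (-b * t) * ((t ^ (q + k) : ℝ) : ℂ) := by
        refine setIntegral_congr_fun measurableSet_Ioi fun t (ht : 0 < t) => ?_
        rw [Real.rpow_add ht, Real.rpow_natCast, Complex.ofReal_mul, Complex.ofReal_pow, mul_assoc]
    _ = _ := by
        rw [integral_cexp_neg_mul_mul_rpow hqk hb, hpoch,
          show ((q + k + 1 : ℝ) : ℂ) = ((q + 1 : ℝ) : ℂ) + k by push_cast; ring,
          Complex.cpow_add _ _ hb0, Complex.cpow_natCast]
        field_simp

theorem integral_cexp_neg_mul_mul_rpow_mul_sum {q : ℝ} (hq : -1 < q) {b : ℂ} (hb : 0 < b.re)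
    (s : Finset ℕ) (a : ℕ → ℂ) :
    ∫ t in Ioi (0 : ℝ), Complex.exp (-b * t) * ((t ^ q : ℝ) : ℂ) * ∑ k ∈ s, a k * (t : ℂ) ^ k =
      Real.Gamma (q + 1) / b ^ ((q + 1 : ℝ) : ℂ) *
        ∑ k ∈ s, a k * ((ascPochhammer ℂ k).eval ((q : ℂ) + 1) / b ^ k) := by
  have hintegrable : ∀ k, IntegrableOn
      (fun t : ℝ => Complex.exp (-b * t) * ((t ^ q : ℝ) : ℂ) * (t : ℂ) ^ k) (Ioi 0) := by
    intro k
    refine Integrable.of_integral_ne_zero ?_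
    have hb0 : b ≠ 0 := by rintro rfl; simp at hb
    rw [integral_cexp_neg_mul_mul_rpow_mul_pow hq hb]
    have := ascPochhammer_eval_ne_zero (Complex.ofReal_add_one_ne_neg_natCast hq) k
    have := (Real.Gamma_pos_of_pos (by linarith : 0 < q + 1)).ne'
    simp_all [Complex.cpow_eq_zero_iff]
  simp_rw [Finset.mul_sum, mul_left_comm _ (a _)]
  rw [integral_finsetSum _ fun k _ => (hintegrable k).const_mul (a k)]
  simp_rw [integral_const_mul, integral_cexp_neg_mul_mul_rpow_mul_pow hq hb]

theorem lagPoly_eq_sum_ascPochhammer {α : ℝ} (hα : ∀ m : ℕ, (α : ℂ) + 1 ≠ -m) (n : ℕ) (t : ℝ) :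
    (lagPoly α n t : ℂ) =
      ((Real.Gamma (n + α + 1) / (Real.Gamma (α + 1) * n.factorial) : ℝ) : ℂ) *
        ∑ k ∈ Finset.range (n + 1), (ascPochhammer ℂ k).eval (-(n : ℂ)) /
          ((ascPochhammer ℂ k).eval ((α : ℂ) + 1) * k.factorial) * (t : ℂ) ^ k := by
  rw [lagPoly, Finset.mul_sum]
  push_cast
  refine Finset.sum_congr rfl fun k hk => ?_
  have hkn : k ≤ n := Nat.lt_succ_iff.1 (Finset.mem_range.1 hk)
  have hGamma : (Real.Gamma (k + α + 1) : ℂ) =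
      Real.Gamma (α + 1) * (ascPochhammer ℂ k).eval ((α : ℂ) + 1) := by
    rw [← Complex.Gamma_ofReal, ← Complex.Gamma_ofReal]
    push_cast
    rw [← Complex.Gamma_add_nat_eq_mul_ascPochhammer hα]
    ring_nf
  have hneg :
      (ascPochhammer ℂ k).eval (-(n : ℂ)) = (-1) ^ k * n.factorial / (n - k).factorial := by
    rw [eq_div_iff (Nat.cast_ne_zero.2 (Nat.factorial_ne_zero _)),
      ascPochhammer_eval_neg_natCast_mul_factorial hkn]
  have hΓ : (Real.Gamma (α + 1) : ℂ) ≠ 0 := by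
    rw [← Complex.Gamma_ofReal]; push_cast; exact Complex.Gamma_ne_zero hα
  have hpoch := ascPochhammer_eval_ne_zero hα k
  have hfac : (n.factorial : ℂ) ≠ 0 := Nat.cast_ne_zero.2 (Nat.factorial_ne_zero _)
  rw [hGamma, hneg]
  field_simp

theorem lagCoef_eq_hypergeometric (τ α : ℝ) (hτ : 0 < τ) (hα : -1 < α)
    (n : ℕ) (z : ℂ) (hz : z.re < 0) :
    lagCoef α τ n z =
      ((Real.Gamma (α / 2 + 1) : ℂ) / ((τ / 2 : ℂ) - z) ^ ((α / 2 + 1 : ℝ) : ℂ)) *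
        ((τ ^ ((α + 1) / 2) : ℝ) : ℂ) *
        ((Real.Gamma (n + α + 1) / (Real.Gamma (α + 1) * n.factorial) : ℝ) : ℂ) *
        ((Real.sqrt (n.factorial / Real.Gamma (n + α + 1)) : ℝ) : ℂ) *
        ∑ k ∈ Finset.range (n + 1),
          ((ascPochhammer ℂ k).eval (-(n : ℂ)) * (ascPochhammer ℂ k).eval ((α : ℂ) / 2 + 1)) /
              ((ascPochhammer ℂ k).eval ((α : ℂ) + 1) * (k.factorial : ℂ)) *
            ((τ : ℂ) / ((τ / 2 : ℂ) - z)) ^ k := by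
  set w : ℂ := (τ / 2 : ℂ) - z with hw_def
  have hw : 0 < w.re := by
    simp only [hw_def, Complex.sub_re, Complex.div_ofNat_re, Complex.ofReal_re]
    linarith
  set c : ℂ := ((Real.sqrt (n.factorial / Real.Gamma (n + α + 1)) : ℝ) : ℂ) *
    ((τ ^ ((α + 1) / 2) : ℝ) : ℂ) *
    ((Real.Gamma (n + α + 1) / (Real.Gamma (α + 1) * n.factorial) : ℝ) : ℂ)
  set a : ℕ → ℂ := fun k => (ascPochhammer ℂ k).eval (-(n : ℂ)) /
    ((ascPochhammer ℂ k).eval ((α : ℂ) + 1) * k.factorial) * (τ : ℂ) ^ k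
  have hintegrand : ∀ t ∈ Ioi (0 : ℝ), Complex.exp (z * t) * (lagFun α τ n t : ℂ) =
      c * (Complex.exp (-w * t) * ((t ^ (α / 2) : ℝ) : ℂ) *
        ∑ k ∈ Finset.range (n + 1), a k * (t : ℂ) ^ k) := by
    intro t _
    have hexp : Complex.exp (z * t) * Complex.exp (-τ * t / 2) = Complex.exp (-w * t) := by
      rw [← Complex.exp_add, hw_def]; ring_nf
    have hsum : ∑ k ∈ Finset.range (n + 1), (ascPochhammer ℂ k).eval (-(n : ℂ)) /
          ((ascPochhammer ℂ k).eval ((α : ℂ) + 1) * k.factorial) * ((τ * t : ℝ) : ℂ) ^ k =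
        ∑ k ∈ Finset.range (n + 1), a k * (t : ℂ) ^ k :=
      Finset.sum_congr rfl fun k _ => by push_cast; ring
    rw [lagFun, Complex.ofReal_mul, lagPoly_eq_sum_ascPochhammer
      (Complex.ofReal_add_one_ne_neg_natCast hα), hsum, ← hexp]
    simp only [c]
    push_cast
    ring
  rw [lagCoef, setIntegral_congr_fun measurableSet_Ioi hintegrand, integral_const_mul,
    integral_cexp_neg_mul_mul_rpow_mul_sum (q := α / 2) (by linarith) hw]
  simp only [c, a, Finset.mul_sum]
  refine Finset.sum_congr rfl fun k _ => ?_
  push_cast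
  ring
end

section
/- Let A be an M×M complex matrix all of whose eigenvalues have negative real part, let λ be an eigenvalue of A, and let τ > 0, α > −1, N ∈ ℕ. Then ζ(N,τ,α,λ) ≤ ∫₀^∞ ‖exp(tA) − Σ_{n=0}^N S_{n,τ,α,A} · l_{n,τ}^α(t)‖_F² dt; equivalently, √(max_{λ∈σ(A)} ζ(N,τ,α,λ)) ≤ ‖H_A − H_{N,τ,α,A}‖_{L²[0,∞)}. -/
/-!
If `A *ᵥ u = λ • u` with `u ≠ 0`, then `exp (tA) u = e^{λt} u` and `S_{n,τ,α,A} u = s_{n,τ,α,λ} u`,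
so the matrix truncation error `D(t)` satisfies `D(t) u = z(t) u`, where `z(t)` is the scalar
truncation error of `e^{λt}`; Cauchy–Schwarz gives `|z(t)|² ≤ ‖D(t)‖_F²` pointwise.

Integrating this needs `‖D‖_F²` to be integrable on `(0, ∞)`. Every entry of `exp (tA)` is in
`L²(0, ∞)`: on a generalized eigenvector for `μ`, `exp (tA)` acts as `e^{μt}` times a polynomial
in `t`, and `Re μ < 0`. Each `l_{n,τ}^α` is in `L²(0, ∞)` as a combination of the functions
`t^{α/2+k} e^{-τt/2}`, `α > -1`. Products of two `L²` functions are integrable, which also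
justifies moving `u` inside the integral defining `S_{n,τ,α,A}`.
-/

open MeasureTheory

noncomputable def lagZeta (N : ℕ) (τ α : ℝ) (z : ℂ) : ℝ :=
  ∫ t in Set.Ioi (0 : ℝ),
    ‖Complex.exp (z * t) -
        ∑ n ∈ Finset.range (N + 1), lagCoef α τ n z * (lagFun α τ n t : ℂ)‖ ^ 2

noncomputable def matLagCoef (α τ : ℝ) (n : ℕ) {M : ℕ} (A : Matrix (Fin M) (Fin M) ℂ) :
    Matrix (Fin M) (Fin M) ℂ :=
  Matrix.of fun i j =>
    ∫ t in Set.Ioi (0 : ℝ), (NormedSpace.exp ((t : ℂ) • A)) i j * (lagFun α τ n t : ℂ)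

noncomputable def frobSq {M : ℕ} (C : Matrix (Fin M) (Fin M) ℂ) : ℝ :=
  ∑ i, ∑ j, ‖C i j‖ ^ 2

open Set
open scoped Matrix Nat

lemma memLp_two_rpow_mul_exp_neg_mul {s b : ℝ} (hs : -1 < 2 * s) (hb : 0 < b) :
    MemLp (fun t : ℝ => t ^ s * Real.exp (-b * t)) 2 (volume.restrict (Ioi 0)) := by
  have hmeas : AEStronglyMeasurable (fun t : ℝ => t ^ s * Real.exp (-b * t))
      (volume.restrict (Ioi 0)) := by fun_prop
  refine (memLp_two_iff_integrable_sq hmeas).2 <|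
    (integrableOn_rpow_mul_exp_neg_mul_rpow hs one_pos (by positivity : 0 < 2 * b)).congr_fun
      (fun t ht => ?_) measurableSet_Ioi
  simp only [Real.rpow_one]
  rw [mul_pow, ← Real.rpow_natCast, ← Real.rpow_mul (le_of_lt ht), ← Real.exp_nat_mul]
  push_cast; ring_nf

lemma memLp_two_pow_mul_cexp {μ : ℂ} (hμ : μ.re < 0) (j : ℕ) :
    MemLp (fun t : ℝ => (t : ℂ) ^ j * Complex.exp (t * μ)) 2 (volume.restrict (Ioi 0)) := by
  refine (memLp_two_rpow_mul_exp_neg_mul (s := j) (by linarith [j.cast_nonneg (α := ℝ)])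
    (neg_pos.2 hμ)).congr_norm (by fun_prop) ?_
  filter_upwards [ae_restrict_mem measurableSet_Ioi] with t ht
  simp [Complex.norm_exp, abs_of_pos (show (0:ℝ) < t from ht), Real.rpow_natCast, mul_comm]

lemma exists_lagFun_eq_sum (α τ : ℝ) (n : ℕ) :
    ∃ c : ℕ → ℝ, ∀ t : ℝ, 0 < t → lagFun α τ n t =
      ∑ k ∈ Finset.range (n + 1), c k * (t ^ (α / 2 + k) * Real.exp (-(τ / 2) * t)) := by
  refine ⟨fun k => Real.sqrt (n.factorial / Real.Gamma (n + α + 1)) * τ ^ ((α + 1) / 2) *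
    ((-1) ^ k * (Real.Gamma (n + α + 1) / (Real.Gamma (k + α + 1) * (n - k).factorial)) *
      τ ^ k / k.factorial), fun t ht => ?_⟩
  simp only [lagFun, lagPoly, Finset.mul_sum, Real.rpow_add ht, Real.rpow_natCast]
  refine Finset.sum_congr rfl fun k _ => ?_
  ring_nf

lemma memLp_lagFun {α τ : ℝ} (hα : -1 < α) (hτ : 0 < τ) (n : ℕ) :
    MemLp (lagFun α τ n) 2 (volume.restrict (Ioi 0)) := by
  obtain ⟨c, hc⟩ := exists_lagFun_eq_sum α τ n
  have hsum : MemLp (fun t : ℝ => ∑ k ∈ Finset.range (n + 1),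
      c k * (t ^ (α / 2 + k) * Real.exp (-(τ / 2) * t))) 2 (volume.restrict (Ioi 0)) :=
    memLp_finsetSum _ fun k _ => (memLp_two_rpow_mul_exp_neg_mul
      (by linarith [k.cast_nonneg (α := ℝ)]) (half_pos hτ)).const_mul (c k)
  refine hsum.ae_eq ?_
  filter_upwards [ae_restrict_mem measurableSet_Ioi] with t ht
  exact (hc t ht).symm

namespace Matrix

variable {n : Type*} [Fintype n] [DecidableEq n]

lemma exp_mulVec_eq_tsum (B : Matrix n n ℂ) (v : n → ℂ) :
    NormedSpace.exp B *ᵥ v = ∑' k : ℕ, (k ! : ℂ)⁻¹ • (B ^ k *ᵥ v) := by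
  let _ : NormedRing (Matrix n n ℂ) := Matrix.linftyOpNormedRing
  let _ : NormedAlgebra ℂ (Matrix n n ℂ) := Matrix.linftyOpNormedAlgebra
  let L : Matrix n n ℂ →L[ℂ] (n → ℂ) :=
    LinearMap.toContinuousLinearMap ((Matrix.mulVecBilin ℂ ℂ).flip v)
  have := L.map_tsum (NormedSpace.expSeries_summable' (𝕂 := ℂ) B)
  simpa [L, NormedSpace.exp_eq_tsum ℂ, Matrix.smul_mulVec] using this

lemma exp_smul_eq_cexp_smul_exp_smul_sub (A : Matrix n n ℂ) (μ t : ℂ) :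
    NormedSpace.exp (t • A) = Complex.exp (t * μ) • NormedSpace.exp (t • (A - μ • 1)) := by
  let _ : NormedRing (Matrix n n ℂ) := Matrix.linftyOpNormedRing
  let _ : NormedAlgebra ℂ (Matrix n n ℂ) := Matrix.linftyOpNormedAlgebra
  have hsplit : t • A = algebraMap ℂ _ (t * μ) + t • (A - μ • 1) := by
    rw [Algebra.algebraMap_eq_smul_one, smul_sub, smul_smul]; abel
  rw [hsplit, Matrix.exp_add_of_commute _ _ (Algebra.commute_algebraMap_left _ _)]
  erw [← NormedSpace.algebraMap_exp_comm]
  rw [← Algebra.smul_def, Complex.exp_eq_exp_ℂ]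

lemma exp_smul_mulVec_of_pow_mulVec_eq_zero (A : Matrix n n ℂ) {μ : ℂ} {v : n → ℂ} {k : ℕ}
    (hv : (A - μ • 1) ^ k *ᵥ v = 0) (t : ℂ) :
    NormedSpace.exp (t • A) *ᵥ v = ∑ j ∈ Finset.range k,
      (t ^ j * Complex.exp (t * μ)) • ((j ! : ℂ)⁻¹ • ((A - μ • 1) ^ j *ᵥ v)) := by
  have hvanish : ∀ j, k ≤ j → (A - μ • 1) ^ j *ᵥ v = 0 := fun j hj => by
    rw [← Nat.sub_add_cancel hj, pow_add, ← mulVec_mulVec, hv, mulVec_zero]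
  rw [exp_smul_eq_cexp_smul_exp_smul_sub A μ, smul_mulVec, exp_mulVec_eq_tsum,
    tsum_eq_sum (s := Finset.range k) fun j hj => by
      rw [smul_pow, smul_mulVec, hvanish j (by simpa using hj), smul_zero, smul_zero],
    Finset.smul_sum]
  refine Finset.sum_congr rfl fun j _ => ?_
  rw [smul_pow, smul_mulVec, smul_smul, smul_smul, smul_smul]
  congr 1
  ring

lemma exp_smul_mulVec_of_mulVec_eq_smul (A : Matrix n n ℂ) {μ : ℂ} {u : n → ℂ}
    (hu : A *ᵥ u = μ • u) (t : ℂ) :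
    NormedSpace.exp (t • A) *ᵥ u = Complex.exp (t * μ) • u := by
  have hu' : (A - μ • 1) ^ 1 *ᵥ u = 0 := by simp [sub_mulVec, hu, smul_mulVec]
  simpa using exp_smul_mulVec_of_pow_mulVec_eq_zero A hu' t

lemma mem_spectrum_of_pow_sub_smul_mulVec_eq_zero {K : Type*} [Field K] (A : Matrix n n K)
    {μ : K} {v : n → K} {k : ℕ} (hv0 : v ≠ 0) (hv : (A - μ • 1) ^ k *ᵥ v = 0) :
    μ ∈ spectrum K A := by
  by_contra h
  rw [spectrum.notMem_iff] at h
  have hunit : IsUnit ((A - μ • 1) ^ k) := by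
    rw [← neg_sub, ← Algebra.algebraMap_eq_smul_one]
    exact h.neg.pow k
  exact hv0 (mulVec_injective_iff_isUnit.2 hunit (by rw [hv, mulVec_zero]))

lemma exists_mulVec_eq_smul_of_mem_spectrum {K : Type*} [Field K] (A : Matrix n n K) {μ : K}
    (hμ : μ ∈ spectrum K A) : ∃ u ≠ 0, A *ᵥ u = μ • u := by
  rw [← spectrum_toLin', ← Module.End.hasEigenvalue_iff_mem_spectrum] at hμ
  obtain ⟨u, hu⟩ := hμ.exists_hasEigenvector
  exact ⟨u, hu.2, by simpa using hu.apply_eq_smul⟩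

lemma memLp_exp_smul_mulVec_apply (A : Matrix n n ℂ) (hA : ∀ μ ∈ spectrum ℂ A, μ.re < 0)
    (v : n → ℂ) (i : n) :
    MemLp (fun t : ℝ => (NormedSpace.exp ((t : ℂ) • A) *ᵥ v) i) 2 (volume.restrict (Ioi 0)) := by
  have hv : v ∈ ⨆ μ, Module.End.maxGenEigenspace (toLin' A) μ := by
    rw [Module.End.iSup_maxGenEigenspace_eq_top]; trivial
  induction hv using Submodule.iSup_induction' with
  | mem μ v hv =>
    obtain ⟨k, hk⟩ := (Module.End.mem_maxGenEigenspace _ μ v).1 hv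
    have hk' : (A - μ • 1) ^ k *ᵥ v = 0 := by
      rw [← toLinAlgEquiv'_apply, map_pow, map_sub, map_smul, map_one]
      exact hk
    rcases eq_or_ne v 0 with rfl | hv0
    · simp
    have hμ := hA μ (mem_spectrum_of_pow_sub_smul_mulVec_eq_zero A hv0 hk')
    simp only [exp_smul_mulVec_of_pow_mulVec_eq_zero A hk', Finset.sum_apply, Pi.smul_apply,
      smul_eq_mul]
    exact memLp_finsetSum _ fun j _ => (memLp_two_pow_mul_cexp hμ j).mul_const _
  | zero => simp
  | add x y _ _ hx hy =>
    simp only [mulVec_add, Pi.add_apply]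
    exact hx.add hy

lemma memLp_exp_smul_apply (A : Matrix n n ℂ) (hA : ∀ μ ∈ spectrum ℂ A, μ.re < 0) (i j : n) :
    MemLp (fun t : ℝ => NormedSpace.exp ((t : ℂ) • A) i j) 2 (volume.restrict (Ioi 0)) := by
  simpa [mulVec_single_one] using memLp_exp_smul_mulVec_apply A hA (Pi.single j 1) i

lemma sum_sq_norm_mulVec_le {m n : Type*} [Fintype m] [Fintype n] (D : Matrix m n ℂ)
    (u : n → ℂ) : ∑ i, ‖(D *ᵥ u) i‖ ^ 2 ≤ (∑ i, ∑ j, ‖D i j‖ ^ 2) * ∑ j, ‖u j‖ ^ 2 := by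
  rw [Finset.sum_mul]
  refine Finset.sum_le_sum fun i _ => ?_
  calc ‖(D *ᵥ u) i‖ ^ 2 ≤ (∑ j, ‖D i j‖ * ‖u j‖) ^ 2 := by
        gcongr
        exact (norm_sum_le _ _).trans_eq (by simp)
    _ ≤ (∑ j, ‖D i j‖ ^ 2) * ∑ j, ‖u j‖ ^ 2 := Finset.sum_mul_sq_le_sq_mul_sq _ _ _

end Matrix

section Laguerre

variable {M : ℕ} {α τ : ℝ}

lemma sq_norm_le_frobSq_of_mulVec_eq_smul {D : Matrix (Fin M) (Fin M) ℂ} {u : Fin M → ℂ}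
    {z : ℂ} (hu : u ≠ 0) (h : D *ᵥ u = z • u) : ‖z‖ ^ 2 ≤ frobSq D := by
  have hpos : 0 < ∑ j, ‖u j‖ ^ 2 := by
    obtain ⟨j, hj⟩ := Function.ne_iff.1 hu
    exact Finset.sum_pos' (fun _ _ => by positivity)
      ⟨j, Finset.mem_univ _, pow_pos (norm_pos_iff.2 hj) 2⟩
  refine le_of_mul_le_mul_right ?_ hpos
  calc ‖z‖ ^ 2 * ∑ j, ‖u j‖ ^ 2 = ∑ i, ‖(D *ᵥ u) i‖ ^ 2 := by
        simp [h, mul_pow, Finset.mul_sum]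
    _ ≤ frobSq D * ∑ j, ‖u j‖ ^ 2 := Matrix.sum_sq_norm_mulVec_le D u

lemma matLagCoef_mulVec_of_mulVec_eq_smul {A : Matrix (Fin M) (Fin M) ℂ}
    (hA : ∀ μ ∈ spectrum ℂ A, μ.re < 0) (hα : -1 < α) (hτ : 0 < τ) {lam : ℂ} {u : Fin M → ℂ}
    (hu : A *ᵥ u = lam • u) (n : ℕ) :
    matLagCoef α τ n A *ᵥ u = lagCoef α τ n lam • u := by
  ext i
  have hint (j : Fin M) : Integrable (fun t : ℝ =>
      NormedSpace.exp ((t : ℂ) • A) i j * lagFun α τ n t * u j) (volume.restrict (Ioi 0)) :=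
    ((Matrix.memLp_exp_smul_apply A hA i j).integrable_mul
      (memLp_lagFun hα hτ n).ofReal).mul_const (u j)
  calc (matLagCoef α τ n A *ᵥ u) i
      = ∑ j, ∫ t in Ioi (0 : ℝ), NormedSpace.exp ((t : ℂ) • A) i j * lagFun α τ n t * u j := by
        simp [matLagCoef, Matrix.mulVec, dotProduct, integral_mul_const]
    _ = ∫ t in Ioi (0 : ℝ), (NormedSpace.exp ((t : ℂ) • A) *ᵥ u) i * lagFun α τ n t := by
        rw [← integral_finsetSum _ fun j _ => hint j]
        simp only [Matrix.mulVec, dotProduct, Finset.sum_mul]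
        congr 1; funext t
        exact Finset.sum_congr rfl fun j _ => by ring
    _ = lagCoef α τ n lam * u i := by
        simp only [Matrix.exp_smul_mulVec_of_mulVec_eq_smul A hu, Pi.smul_apply, smul_eq_mul,
          lagCoef, ← integral_mul_const]
        congr 1; funext t
        ring_nf

lemma integrableOn_frobSq_truncation_error {A : Matrix (Fin M) (Fin M) ℂ}
    (hA : ∀ μ ∈ spectrum ℂ A, μ.re < 0) (hα : -1 < α) (hτ : 0 < τ) (N : ℕ) :
    IntegrableOn (fun t : ℝ => frobSq (NormedSpace.exp ((t : ℂ) • A) -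
      ∑ n ∈ Finset.range (N + 1), (lagFun α τ n t : ℂ) • matLagCoef α τ n A)) (Ioi 0) := by
  refine integrable_finsetSum _ fun i _ => integrable_finsetSum _ fun j _ => ?_
  have hentry : MemLp (fun t : ℝ => (NormedSpace.exp ((t : ℂ) • A) -
      ∑ n ∈ Finset.range (N + 1), (lagFun α τ n t : ℂ) • matLagCoef α τ n A) i j) 2
      (volume.restrict (Ioi 0)) := by
    simp only [Matrix.sub_apply, Matrix.sum_apply, Matrix.smul_apply, smul_eq_mul]
    exact (Matrix.memLp_exp_smul_apply A hA i j).sub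
      (memLp_finsetSum _ fun n _ => (memLp_lagFun hα hτ n).ofReal.mul_const _)
  exact (memLp_two_iff_integrable_sq_norm hentry.1).1 hentry

end Laguerre

theorem lagZeta_le_truncation_error (M : ℕ) (A : Matrix (Fin M) (Fin M) ℂ)
    (hA : ∀ μ ∈ spectrum ℂ A, μ.re < 0) (lam : ℂ) (hlam : lam ∈ spectrum ℂ A)
    (τ α : ℝ) (hτ : 0 < τ) (hα : -1 < α) (N : ℕ) :
    lagZeta N τ α lam ≤
      ∫ t in Set.Ioi (0 : ℝ),
        frobSq (NormedSpace.exp ((t : ℂ) • A) -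
          ∑ n ∈ Finset.range (N + 1), (lagFun α τ n t : ℂ) • matLagCoef α τ n A) := by
  obtain ⟨u, hu0, hu⟩ := Matrix.exists_mulVec_eq_smul_of_mem_spectrum A hlam
  have herr_mulVec (t : ℝ) : (NormedSpace.exp ((t : ℂ) • A) -
      ∑ n ∈ Finset.range (N + 1), (lagFun α τ n t : ℂ) • matLagCoef α τ n A) *ᵥ u =
      (Complex.exp (lam * t) -
        ∑ n ∈ Finset.range (N + 1), lagCoef α τ n lam * (lagFun α τ n t : ℂ)) • u := by
    simp only [Matrix.sub_mulVec, Matrix.sum_mulVec, Matrix.smul_mulVec,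
      matLagCoef_mulVec_of_mulVec_eq_smul hA hα hτ hu,
      Matrix.exp_smul_mulVec_of_mulVec_eq_smul A hu, sub_smul, Finset.sum_smul, smul_smul, mul_comm]
  exact integral_mono_of_nonneg (ae_of_all _ fun t => by positivity)
    (integrableOn_frobSq_truncation_error hA hα hτ N)
    (ae_of_all _ fun t => sq_norm_le_frobSq_of_mulVec_eq_smul hu0 (herr_mulVec t))
end

section
/- Let α > −1 be real, n ∈ ℕ, and λ ∈ ℂ with Re λ < 0. Then the map τ ↦ s_{n,τ,α,λ} is differentiable on (0,∞), and its derivative at τ > 0 equals d_{n+1} · s_{n+1,τ,α,λ} − d_n · s_{n−1,τ,α,λ}, where d_m = √(m(m+α))/(2τ) for m ≥ 1, d_0 = 0, and s_{−1,τ,α,λ} := 0. -/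
open MeasureTheory

/-- The coefficient `d_m = √(m(m+α))/(2τ)` (which vanishes for `m = 0`). -/
noncomputable def dCoef (α τ : ℝ) (m : ℕ) : ℝ :=
  Real.sqrt (m * (m + α)) / (2 * τ)

/-!
Write `l_{n,τ}(t) = c_n w_τ(t) L_n(τt)` with `w_τ(t) = τ^{(α+1)/2} t^{α/2} e^{-τt/2}`.
At `u = τt`, `∂_τ l_{n,τ}(t) = c_n w_τ(t) / (2τ) · ((α+1-u) L_n(u) + 2u L_n'(u))`, and the
classical relations `u L_{n+1}' = (n+1) L_{n+1} - (n+α+1) L_n` and `L_{n+1}' = L_n' - L_n`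
(coefficientwise identities between binomial coefficients and Gamma values) turn the bracket
into `(n+1) L_{n+1} - (n+α) L_{n-1}`. The normalisations satisfy `√(m(m+α)) c_m = m c_{m-1}`
and `√(m(m+α)) c_{m-1} = (m+α) c_m`, which produces the coefficients `d_m`.
Differentiation under the integral sign is justified by the bound
`|l_{m,s}(t)| ≤ C t^{α/2} (1+t)^N`, uniform for `s` in a compact subinterval of `(0, ∞)`,
which `|e^{λt}| = e^{(Re λ) t}` makes integrable on `(0, ∞)`.
-/

open Polynomial Set
open scoped Nat

lemma Real.sqrt_mul_mul_sqrt_div {x y : ℝ} (hx : 0 ≤ x) (hy : 0 < y) :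
    √(x * y) * √(x / y) = x := by
  rw [← Real.sqrt_mul (by positivity), show x * y * (x / y) = x ^ 2 by field_simp,
    Real.sqrt_sq hx]

lemma Real.mul_sqrt_div {x y : ℝ} (hy : 0 < y) : y * √(x / y) = √(x * y) := by
  rw [← Real.sqrt_sq hy.le, ← Real.sqrt_mul (sq_nonneg y), Real.sqrt_sq hy.le]
  congr 1
  field_simp

lemma Polynomial.abs_eval_le_mul_one_add_pow {p : ℝ[X]} {m : ℕ} (hp : p.natDegree ≤ m)
    (x : ℝ) :
    |p.eval x| ≤ (∑ i ∈ Finset.range (m + 1), |p.coeff i|) * (1 + |x|) ^ m := by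
  rw [eval_eq_sum_range' (Nat.lt_succ_of_le hp), Finset.sum_mul]
  refine (Finset.abs_sum_le_sum_abs _ _).trans (Finset.sum_le_sum fun i hi => ?_)
  rw [abs_mul, abs_pow]
  gcongr
  calc |x| ^ i ≤ (1 + |x|) ^ i := by gcongr; linarith
    _ ≤ (1 + |x|) ^ m := pow_le_pow_right₀ (by linarith [abs_nonneg x])
        (Nat.lt_succ_iff.mp (Finset.mem_range.mp hi))

lemma integrableOn_rpow_mul_one_add_pow_mul_exp {a c : ℝ} (ha : -1 < a) (hc : c < 0)
    (N : ℕ) :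
    IntegrableOn (fun t => t ^ a * (1 + t) ^ N * Real.exp (c * t)) (Ioi 0) := by
  have hterm (j : ℕ) : IntegrableOn (fun t : ℝ => t ^ (a + j) * Real.exp (c * t)) (Ioi 0) := by
    have h := integrableOn_rpow_mul_exp_neg_mul_rpow (p := 1)
      (by have := j.cast_nonneg (α := ℝ); linarith : -1 < a + j) zero_lt_one (neg_pos.mpr hc)
    refine h.congr_fun (fun t _ => ?_) measurableSet_Ioi
    simp
  have hsum : IntegrableOn (fun t => ∑ j ∈ Finset.range (N + 1),
      (N.choose j : ℝ) * (t ^ (a + j) * Real.exp (c * t))) (Ioi 0) :=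
    integrable_finsetSum _ fun j _ => (hterm j).const_mul _
  refine hsum.congr_fun (fun t ht => ?_) measurableSet_Ioi
  simp only [add_comm 1 t, add_pow, one_pow, mul_one, Finset.mul_sum, Finset.sum_mul]
  refine Finset.sum_congr rfl fun j _ => ?_
  rw [Real.rpow_add ht, Real.rpow_natCast]
  ring

lemma norm_cexp_mul_ofReal_le {z : ℂ} {t x B : ℝ} (h : |x| ≤ B) :
    ‖Complex.exp (z * t) * x‖ ≤ B * Real.exp (z.re * t) := by
  rw [norm_mul, Complex.norm_exp, Complex.norm_real, Real.norm_eq_abs, mul_comm]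
  simp only [Complex.mul_re, Complex.ofReal_re, Complex.ofReal_im, mul_zero, sub_zero]
  gcongr

lemma cast_choose_succ_mul_sub (n k : ℕ) :
    ((n + 1).choose k : ℝ) * (n + 1 - k) = n.choose k * (n + 1) := by
  rcases le_or_gt k (n + 1) with hk | hk
  · have := congrArg (Nat.cast (R := ℝ)) (Nat.choose_mul_succ_eq n k)
    push_cast [Nat.cast_sub hk] at this
    linarith
  · simp [Nat.choose_eq_zero_of_lt hk, Nat.choose_eq_zero_of_lt (by omega : n < k)]

lemma cast_choose_succ_mul (n k : ℕ) :
    (n.choose (k + 1) : ℝ) * (k + 1) = n.choose k * (n - k) := by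
  rcases le_or_gt k n with hk | hk
  · rw [← Nat.cast_sub hk]
    exact_mod_cast Nat.choose_succ_right_eq n k
  · simp [Nat.choose_eq_zero_of_lt hk, Nat.choose_eq_zero_of_lt (by omega : n < k + 1)]

-- `n.choose k / n !` in place of `1 / (k! (n-k)!)`, so that it vanishes for `k > n`.
noncomputable def lagCoeff (α : ℝ) (n k : ℕ) : ℝ :=
  (-1) ^ k * n.choose k * Real.Gamma (n + α + 1) / (n ! * Real.Gamma (k + α + 1))

noncomputable def lagPolynomial (α : ℝ) (n : ℕ) : ℝ[X] :=
  ∑ k ∈ Finset.range (n + 1), C (lagCoeff α n k) * X ^ k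

lemma coeff_lagPolynomial (α : ℝ) (n k : ℕ) :
    (lagPolynomial α n).coeff k = lagCoeff α n k := by
  simp only [lagPolynomial, finsetSum_coeff, coeff_C_mul_X_pow, Finset.sum_ite_eq,
    Finset.mem_range]
  split_ifs with hk
  · rfl
  · simp [lagCoeff, Nat.choose_eq_zero_of_lt (by omega : n < k)]

lemma lagPoly_eq_eval (α : ℝ) (n : ℕ) (u : ℝ) :
    lagPoly α n u = (lagPolynomial α n).eval u := by
  simp only [lagPoly, lagPolynomial, eval_finsetSum, eval_mul, eval_C, eval_pow, eval_X]
  refine Finset.sum_congr rfl fun k hk => ?_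
  rw [lagCoeff, Nat.cast_choose ℝ (Finset.mem_range_succ_iff.mp hk)]
  field_simp

lemma natDegree_lagPolynomial_le (α : ℝ) (n : ℕ) : (lagPolynomial α n).natDegree ≤ n :=
  natDegree_le_iff_coeff_eq_zero.mpr fun k hk => by
    simp [coeff_lagPolynomial, lagCoeff, Nat.choose_eq_zero_of_lt (by exact_mod_cast hk : n < k)]

@[fun_prop]
lemma measurable_lagFun (α τ : ℝ) (n : ℕ) : Measurable (lagFun α τ n) := by
  unfold lagFun lagPoly
  fun_prop

section

variable {α : ℝ}

lemma natCast_add_add_one_pos (hα : -1 < α) (n : ℕ) : 0 < (n : ℝ) + α + 1 := by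
  have := n.cast_nonneg (α := ℝ); linarith

lemma Gamma_natCast_add_pos (hα : -1 < α) (n : ℕ) : 0 < Real.Gamma (n + α + 1) :=
  Real.Gamma_pos_of_pos (natCast_add_add_one_pos hα n)

lemma Gamma_natCast_succ_add (hα : -1 < α) (n : ℕ) :
    Real.Gamma ((n + 1 : ℕ) + α + 1) = (n + α + 1) * Real.Gamma (n + α + 1) := by
  rw [← Real.Gamma_add_one (natCast_add_add_one_pos hα n).ne']
  push_cast; ring_nf

lemma sub_mul_lagCoeff_succ (hα : -1 < α) (n k : ℕ) :
    (n + 1 - k) * lagCoeff α (n + 1) k = (n + α + 1) * lagCoeff α n k := by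
  have hG := Gamma_natCast_add_pos hα k
  simp only [lagCoeff, Gamma_natCast_succ_add hα, Nat.factorial_succ]
  push_cast
  field_simp
  linear_combination (n + α + 1) * Real.Gamma (n + α + 1) * cast_choose_succ_mul_sub n k

lemma succ_mul_lagCoeff_succ_succ (hα : -1 < α) (n k : ℕ) :
    (k + 1) * lagCoeff α (n + 1) (k + 1) = (k + 1) * lagCoeff α n (k + 1) - lagCoeff α n k := by
  have hG := Gamma_natCast_add_pos hα k
  have hGn := Gamma_natCast_add_pos hα n
  have hk := natCast_add_add_one_pos hα k
  simp only [lagCoeff, Gamma_natCast_succ_add hα, Nat.factorial_succ]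
  push_cast
  field_simp
  have h1 : ((n + 1).choose (k + 1) : ℝ) * (k + 1) = (n + 1) * n.choose k := by
    exact_mod_cast (Nat.add_one_mul_choose_eq n k).symm
  linear_combination (-1) ^ (k + 1) * (n + α + 1) * h1 -
    (n + 1) * (-1) ^ (k + 1) * cast_choose_succ_mul n k

lemma X_mul_derivative_lagPolynomial_succ (hα : -1 < α) (n : ℕ) :
    X * derivative (lagPolynomial α (n + 1)) =
      C ((n : ℝ) + 1) * lagPolynomial α (n + 1) -
        C ((n : ℝ) + α + 1) * lagPolynomial α n := by
  ext k
  have h := sub_mul_lagCoeff_succ hα n k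
  rcases k with _ | k
  · simp only [coeff_X_mul_zero, coeff_sub, coeff_C_mul, coeff_lagPolynomial]
    push_cast at h
    linear_combination -h
  · simp only [coeff_X_mul, coeff_derivative, coeff_sub, coeff_C_mul, coeff_lagPolynomial]
    push_cast at h
    linear_combination -h

lemma derivative_lagPolynomial_succ (hα : -1 < α) (n : ℕ) :
    derivative (lagPolynomial α (n + 1)) =
      derivative (lagPolynomial α n) - lagPolynomial α n := by
  ext k
  simp only [coeff_derivative, coeff_sub, coeff_lagPolynomial]
  linear_combination succ_mul_lagCoeff_succ_succ hα n k

lemma succ_mul_lagPolynomial_succ (hα : -1 < α) (n : ℕ) :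
    C ((n : ℝ) + 1) * lagPolynomial α (n + 1) =
      X * derivative (lagPolynomial α n) + C ((n : ℝ) + α + 1) * lagPolynomial α n -
        X * lagPolynomial α n := by
  linear_combination X * derivative_lagPolynomial_succ hα n -
    X_mul_derivative_lagPolynomial_succ hα n

noncomputable def lagNorm (α : ℝ) (n : ℕ) : ℝ :=
  √(n ! / Real.Gamma (n + α + 1))

lemma lagFun_eq (α τ : ℝ) (n : ℕ) (t : ℝ) :
    lagFun α τ n t =
      lagNorm α n * (τ ^ ((α + 1) / 2) * t ^ (α / 2) * Real.exp (-τ * t / 2)) *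
        (lagPolynomial α n).eval (τ * t) := by
  rw [lagFun, lagNorm, lagPoly_eq_eval]; ring

lemma lagNorm_succ (hα : -1 < α) (n : ℕ) :
    lagNorm α (n + 1) = lagNorm α n * √((n + 1) / (n + α + 1)) := by
  have hG := Gamma_natCast_add_pos hα n
  have hn := natCast_add_add_one_pos hα n
  rw [lagNorm, lagNorm, ← Real.sqrt_mul (by positivity), Gamma_natCast_succ_add hα,
    Nat.factorial_succ]
  congr 1
  push_cast
  field_simp

lemma sqrt_mul_lagNorm_succ (hα : -1 < α) (n : ℕ) :
    √((n + 1 : ℕ) * ((n + 1 : ℕ) + α)) * lagNorm α (n + 1) = (n + 1) * lagNorm α n := by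
  have hn := natCast_add_add_one_pos hα n
  rw [lagNorm_succ hα, mul_left_comm]
  push_cast
  rw [show ((n : ℝ) + 1 + α) = n + α + 1 by ring,
    Real.sqrt_mul_mul_sqrt_div (by positivity) hn, mul_comm]

lemma sqrt_mul_lagNorm (hα : -1 < α) (n : ℕ) :
    √((n + 1 : ℕ) * ((n + 1 : ℕ) + α)) * lagNorm α n =
      (n + α + 1) * lagNorm α (n + 1) := by
  have hn := natCast_add_add_one_pos hα n
  rw [lagNorm_succ hα]
  push_cast
  rw [show ((n : ℝ) + 1 + α) = n + α + 1 by ring, ← Real.mul_sqrt_div hn]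
  ring

lemma dCoef_succ_mul_lagFun_succ (hα : -1 < α) (n : ℕ) (s t : ℝ) :
    dCoef α s (n + 1) * lagFun α s (n + 1) t =
      lagNorm α n * (s ^ ((α + 1) / 2) * t ^ (α / 2) * Real.exp (-s * t / 2)) / (2 * s) *
        ((n + 1) * (lagPolynomial α (n + 1)).eval (s * t)) := by
  rw [dCoef, lagFun_eq]
  linear_combination (s ^ ((α + 1) / 2) * t ^ (α / 2) * Real.exp (-s * t / 2) / (2 * s) *
    (lagPolynomial α (n + 1)).eval (s * t)) * sqrt_mul_lagNorm_succ hα n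

lemma dCoef_mul_lagFun_pred (hα : -1 < α) (n : ℕ) {s : ℝ} (hs : s ≠ 0) (t : ℝ) :
    dCoef α s n * lagFun α s (n - 1) t =
      lagNorm α n * (s ^ ((α + 1) / 2) * t ^ (α / 2) * Real.exp (-s * t / 2)) / (2 * s) *
        (n * (lagPolynomial α n).eval (s * t) -
          s * t * (derivative (lagPolynomial α n)).eval (s * t)) := by
  rcases n with _ | m
  · simp [dCoef, lagPolynomial]
  · have h := congrArg (eval (s * t)) (X_mul_derivative_lagPolynomial_succ hα m)
    simp only [eval_mul, eval_sub, eval_C, eval_X] at h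
    rw [dCoef, lagFun_eq, Nat.add_sub_cancel]
    have hc := sqrt_mul_lagNorm hα m
    push_cast at hc ⊢
    field_simp
    linear_combination s ^ ((α + 1) / 2) * t ^ (α / 2) *
      ((lagPolynomial α m).eval (s * t) * hc + lagNorm α (m + 1) * h)

lemma hasDerivAt_lagFun (hα : -1 < α) (n : ℕ) {s : ℝ} (hs : s ≠ 0) (t : ℝ) :
    HasDerivAt (fun s => lagFun α s n t)
      (dCoef α s (n + 1) * lagFun α s (n + 1) t - dCoef α s n * lagFun α s (n - 1) t) s := by
  have he : HasDerivAt (fun s => Real.exp (-s * t / 2)) (Real.exp (-s * t / 2) * (-t / 2)) s :=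
    (((hasDerivAt_neg s).mul_const t).div_const 2).exp.congr_deriv (by ring)
  have hL : HasDerivAt (fun s => (lagPolynomial α n).eval (s * t))
      ((derivative (lagPolynomial α n)).eval (s * t) * t) s := by
    simpa only [Function.comp_def] using
      ((lagPolynomial α n).hasDerivAt (s * t)).comp s (hasDerivAt_mul_const t)
  have H := ((((Real.hasDerivAt_rpow_const (p := (α + 1) / 2) (Or.inl hs)).mul_const
    (t ^ (α / 2))).fun_mul he).const_mul (lagNorm α n)).fun_mul hL
  have hrec := congrArg (eval (s * t)) (succ_mul_lagPolynomial_succ hα n)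
  simp only [eval_mul, eval_add, eval_sub, eval_C, eval_X] at hrec
  rw [Real.rpow_sub_one hs] at H
  rw [dCoef_succ_mul_lagFun_succ hα, dCoef_mul_lagFun_pred hα n hs,
    funext fun s => lagFun_eq α s n t]
  refine H.congr_deriv ?_
  field_simp
  linear_combination -lagNorm α n * s ^ ((α + 1) / 2) * t ^ (α / 2) * hrec

lemma exists_abs_mul_lagFun_le {g : ℝ → ℝ} {a b : ℝ} (ha : 0 < a)
    (hg : ContinuousOn g (Icc a b)) {m N : ℕ} (hmN : m ≤ N) :
    ∃ C, ∀ s ∈ Icc a b, ∀ t, 0 ≤ t →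
      |g s * lagFun α s m t| ≤ C * (t ^ (α / 2) * (1 + t) ^ N) := by
  obtain ⟨M, hM⟩ := isCompact_Icc.exists_bound_of_continuousOn
    (f := fun s => g s * s ^ ((α + 1) / 2))
    (hg.mul (continuousOn_id.rpow_const fun s hs => Or.inl (ha.trans_le hs.1).ne'))
  set K := ∑ i ∈ Finset.range (N + 1), |(lagPolynomial α m).coeff i|
  refine ⟨lagNorm α m * M * K * (1 + b) ^ N, fun s hs t ht => ?_⟩
  have hb : 0 ≤ b := ha.le.trans (hs.1.trans hs.2)
  have hL := abs_eval_le_mul_one_add_pow ((natDegree_lagPolynomial_le α m).trans hmN) (s * t)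
  have hst : 1 + |s * t| ≤ (1 + b) * (1 + t) := by
    rw [abs_of_nonneg (mul_nonneg (ha.le.trans hs.1) ht)]
    nlinarith [hs.2]
  have hexp : Real.exp (-s * t / 2) ≤ 1 :=
    Real.exp_le_one_iff.mpr (by nlinarith [ha.le.trans hs.1])
  have hnorm : 0 ≤ lagNorm α m := Real.sqrt_nonneg _
  have htα : 0 ≤ t ^ (α / 2) := Real.rpow_nonneg ht _
  calc |g s * lagFun α s m t|
      = ‖g s * s ^ ((α + 1) / 2)‖ * (lagNorm α m * t ^ (α / 2) * Real.exp (-s * t / 2) *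
          |(lagPolynomial α m).eval (s * t)|) := by
        rw [lagFun_eq, Real.norm_eq_abs]
        simp only [abs_mul, abs_of_nonneg hnorm, abs_of_nonneg htα, abs_of_pos (Real.exp_pos _)]
        ring
    _ ≤ M * (lagNorm α m * t ^ (α / 2) * 1 * (K * ((1 + b) * (1 + t)) ^ N)) := by
        refine mul_le_mul (hM s hs) ?_ (by positivity) ((norm_nonneg _).trans (hM s hs))
        gcongr
        exact hL.trans (by gcongr)
    _ = _ := by rw [mul_pow]; ring

lemma integrable_cexp_mul_lagFun (hα : -1 < α) {τ : ℝ} (hτ : 0 < τ) (m : ℕ) {z : ℂ}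
    (hz : z.re < 0) :
    Integrable (fun t : ℝ => Complex.exp (z * t) * lagFun α τ m t)
      (volume.restrict (Ioi 0)) := by
  obtain ⟨C, hC⟩ := exists_abs_mul_lagFun_le (α := α) (g := fun _ => 1) (b := τ) hτ
    continuousOn_const (le_refl m)
  refine Integrable.mono'
    ((integrableOn_rpow_mul_one_add_pow_mul_exp (a := α / 2) (by linarith) hz m).const_mul C)
    (by fun_prop) (ae_restrict_of_forall_mem measurableSet_Ioi fun t ht => ?_)
  have := hC τ ⟨le_rfl, le_rfl⟩ t (le_of_lt ht)
  rw [one_mul] at this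
  simpa only [mul_assoc] using norm_cexp_mul_ofReal_le this

lemma exists_abs_lagFun_deriv_le (n : ℕ) {a b : ℝ} (ha : 0 < a) :
    ∃ C, ∀ s ∈ Icc a b, ∀ t, 0 ≤ t →
      |dCoef α s (n + 1) * lagFun α s (n + 1) t - dCoef α s n * lagFun α s (n - 1) t| ≤
        C * (t ^ (α / 2) * (1 + t) ^ (n + 1)) := by
  have hd : ∀ k, ContinuousOn (fun s => dCoef α s k) (Icc a b) := fun k =>
    continuousOn_const.div (continuousOn_const.mul continuousOn_id)
      fun s hs => (mul_pos two_pos (ha.trans_le hs.1)).ne'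
  obtain ⟨C₁, h₁⟩ := exists_abs_mul_lagFun_le (α := α) ha (hd (n + 1)) le_rfl
  obtain ⟨C₂, h₂⟩ :=
    exists_abs_mul_lagFun_le (α := α) ha (hd n) (by omega : n - 1 ≤ n + 1)
  exact ⟨C₁ + C₂, fun s hs t ht =>
    ((abs_sub _ _).trans (add_le_add (h₁ s hs t ht) (h₂ s hs t ht))).trans_eq (by ring)⟩

end

theorem hasDerivAt_lagCoef_tau (α : ℝ) (hα : -1 < α) (n : ℕ) (z : ℂ) (hz : z.re < 0)
    (τ : ℝ) (hτ : 0 < τ) :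
    HasDerivAt (fun s : ℝ => lagCoef α s n z)
      ((dCoef α τ (n + 1) : ℂ) * lagCoef α τ (n + 1) z -
        (dCoef α τ n : ℂ) * lagCoef α τ (n - 1) z)
      τ := by
  have hball : Metric.ball τ (τ / 2) ⊆ Icc (τ / 2) (2 * τ) := fun s hs => by
    rw [Real.ball_eq_Ioo] at hs
    exact ⟨by linarith [hs.1], by linarith [hs.2]⟩
  obtain ⟨C, hC⟩ := exists_abs_lagFun_deriv_le (α := α) n (b := 2 * τ) (half_pos hτ)
  have key := hasDerivAt_integral_of_dominated_loc_of_deriv_le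
    (μ := volume.restrict (Ioi (0 : ℝ)))
    (F' := fun s (t : ℝ) => Complex.exp (z * t) *
      ↑(dCoef α s (n + 1) * lagFun α s (n + 1) t - dCoef α s n * lagFun α s (n - 1) t))
    (Metric.ball_mem_nhds τ (half_pos hτ)) (.of_forall fun s => by fun_prop)
    (integrable_cexp_mul_lagFun hα hτ n hz) (by fun_prop)
    (bound := fun t => C * (t ^ (α / 2) * (1 + t) ^ (n + 1) * Real.exp (z.re * t)))
    (ae_restrict_of_forall_mem measurableSet_Ioi fun t ht s hs =>
      (norm_cexp_mul_ofReal_le (hC s (hball hs) t ht.le)).trans_eq (by ring))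
    ((integrableOn_rpow_mul_one_add_pow_mul_exp (a := α / 2) (by linarith) hz (n + 1)).const_mul C)
    (ae_restrict_of_forall_mem measurableSet_Ioi fun t _ s hs =>
      ((hasDerivAt_lagFun hα n ((half_pos hτ).trans_le (hball hs).1).ne' t).ofReal_comp).const_mul
        _)
  refine key.2.congr_deriv ?_
  simp only [Complex.ofReal_sub, Complex.ofReal_mul, mul_sub, mul_left_comm (Complex.exp _)]
  rw [integral_sub ((integrable_cexp_mul_lagFun hα hτ _ hz).const_mul _)
    ((integrable_cexp_mul_lagFun hα hτ _ hz).const_mul _), integral_const_mul, integral_const_mul]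
  rfl
end
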